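/- arXiv:2509.07779 — 4 statements merged into one kernel-verified Lean document; each statement's English description precedes it below -/
import Mathlib

section
/- Let n ≥ 1, let W be an n×n real matrix that is symmetric and doubly stochastic (all entries nonnegative, every row and every column sums to 1), and let v₁, …, vₙ be vectors in a real inner product space with ∑_{i=1}^n vᵢ = 0. Then ∑_{i=1}^n ∑_{j=1}^n W i j ⟨vᵢ, vⱼ⟩ ≤ σ₂(W) · ∑_{i=1}^n ‖vᵢ‖², where σ₂(W) denotes the operator norm of the matrix W − (1/n)𝟙𝟙ᵀ acting on Euclidean n-space (𝟙 the all-ones vector). -/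
/-!
Since `∑ i, v i = 0`, the rank-one part `(1/n)𝟙𝟙ᵀ` does not contribute to the quadratic form
`∑ i j, W i j ⟪v i, v j⟫`, so `W` may be replaced by `M = W − (1/n)𝟙𝟙ᵀ`. Expanding the `v i` in an
orthonormal basis of their span writes the Gram matrix `(⟪v i, v j⟫)` as a sum of rank-one
matrices `c cᵀ`, which reduces the claim to the scalar bound `cᵀ M c ≤ ‖M‖ ‖c‖²`.
-/

open scoped RealInnerProductSpace BigOperators

/-- `σ₂(W)`: the operator norm of `W − (1/n)𝟙𝟙ᵀ` acting on Euclidean `n`-space. -/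
noncomputable def sigma2 {n : ℕ} (W : Matrix (Fin n) (Fin n) ℝ) : ℝ :=
  ‖(Matrix.toEuclideanCLM (𝕜 := ℝ) (W - (n : ℝ)⁻¹ • Matrix.of fun _ _ => (1 : ℝ)) :
      EuclideanSpace ℝ (Fin n) →L[ℝ] EuclideanSpace ℝ (Fin n))‖

open Finset Matrix

section

variable {ι : Type*} [Fintype ι] {E : Type*} [NormedAddCommGroup E] [InnerProductSpace ℝ E]

theorem Matrix.dotProduct_mulVec_le_opNorm_mul [DecidableEq ι] (A : Matrix ι ι ℝ) (x : ι → ℝ) :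
    x ⬝ᵥ A *ᵥ x ≤ ‖toEuclideanCLM (𝕜 := ℝ) A‖ * (x ⬝ᵥ x) := by
  set y : EuclideanSpace ℝ ι := WithLp.toLp 2 x
  have hy : ‖y‖ ^ 2 = x ⬝ᵥ x := by
    rw [← real_inner_self_eq_norm_sq, EuclideanSpace.inner_eq_star_dotProduct]
    simp [y]
  calc x ⬝ᵥ A *ᵥ x = ⟪y, toEuclideanCLM (𝕜 := ℝ) A y⟫ := (inner_toEuclideanCLM A y y).symm
    _ ≤ ‖y‖ * ‖toEuclideanCLM (𝕜 := ℝ) A y‖ := real_inner_le_norm _ _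
    _ ≤ ‖y‖ * (‖toEuclideanCLM (𝕜 := ℝ) A‖ * ‖y‖) := by
      gcongr; exact ContinuousLinearMap.le_opNorm _ _
    _ = ‖toEuclideanCLM (𝕜 := ℝ) A‖ * (x ⬝ᵥ x) := by rw [← hy]; ring

theorem exists_inner_eq_sum_mul (v : ι → E) :
    ∃ (m : ℕ) (c : Fin m → ι → ℝ), ∀ i j, ⟪v i, v j⟫ = ∑ k, c k i * c k j := by
  let K := Submodule.span ℝ (Set.range v)
  have : FiniteDimensional ℝ K := .span_of_finite ℝ (Set.finite_range v)
  let b := stdOrthonormalBasis ℝ K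
  let w : ι → K := fun i => ⟨v i, Submodule.subset_span (Set.mem_range_self i)⟩
  refine ⟨_, fun k i => ⟪b k, w i⟫, fun i j => ?_⟩
  change ⟪w i, w j⟫ = _
  rw [← b.sum_inner_mul_inner (w i) (w j)]
  simp_rw [real_inner_comm (w i)]

theorem sum_sum_mul_inner_le_opNorm_mul [DecidableEq ι] (A : Matrix ι ι ℝ) (v : ι → E) :
    ∑ i, ∑ j, A i j * ⟪v i, v j⟫ ≤ ‖toEuclideanCLM (𝕜 := ℝ) A‖ * ∑ i, ‖v i‖ ^ 2 := by
  obtain ⟨m, c, hc⟩ := exists_inner_eq_sum_mul v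
  have hquad : ∑ i, ∑ j, A i j * ⟪v i, v j⟫ = ∑ k, c k ⬝ᵥ A *ᵥ c k := by
    calc ∑ i, ∑ j, A i j * ⟪v i, v j⟫ = ∑ i, ∑ j, ∑ k, A i j * (c k i * c k j) := by
          simp only [hc, mul_sum]
      _ = ∑ k, ∑ i, ∑ j, A i j * (c k i * c k j) :=
          (sum_congr rfl fun _ _ => sum_comm).trans sum_comm
      _ = ∑ k, c k ⬝ᵥ A *ᵥ c k := by
          simp only [dotProduct, mulVec, mul_sum, mul_left_comm]
  have hnorm : ∑ i, ‖v i‖ ^ 2 = ∑ k, c k ⬝ᵥ c k := by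
    simp only [← real_inner_self_eq_norm_sq, hc, dotProduct]
    exact sum_comm
  rw [hquad, hnorm, mul_sum]
  exact sum_le_sum fun k _ => A.dotProduct_mulVec_le_opNorm_mul (c k)

theorem sum_sum_sub_const_mul_inner_of_sum_eq_zero (A : Matrix ι ι ℝ) (a : ℝ) {v : ι → E}
    (hv : ∑ i, v i = 0) :
    ∑ i, ∑ j, (A - a • of fun _ _ => (1 : ℝ) : Matrix ι ι ℝ) i j * ⟪v i, v j⟫ =
      ∑ i, ∑ j, A i j * ⟪v i, v j⟫ := by
  have hzero : ∑ i, ∑ j, ⟪v i, v j⟫ = 0 := by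
    simp only [← inner_sum, ← sum_inner, hv, inner_zero_left]
  simp only [Matrix.sub_apply, Matrix.smul_apply, of_apply, smul_eq_mul, mul_one, sub_mul,
    sum_sub_distrib, ← mul_sum, hzero, mul_zero, sub_zero]

end

theorem stmt0_general {n : ℕ} (W : Matrix (Fin n) (Fin n) ℝ)
    {E : Type*} [NormedAddCommGroup E] [InnerProductSpace ℝ E]
    (v : Fin n → E) (hv : ∑ i, v i = 0) :
    ∑ i, ∑ j, W i j * ⟪v i, v j⟫ ≤ sigma2 W * ∑ i, ‖v i‖ ^ 2 := by
  rw [← sum_sum_sub_const_mul_inner_of_sum_eq_zero W (n : ℝ)⁻¹ hv]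
  exact sum_sum_mul_inner_le_opNorm_mul _ v

theorem stmt0 {n : ℕ} (hn : 1 ≤ n) (W : Matrix (Fin n) (Fin n) ℝ)
    (hsymm : W.IsSymm)
    (hnonneg : ∀ i j, 0 ≤ W i j)
    (hrow : ∀ i, ∑ j, W i j = 1)
    (hcol : ∀ j, ∑ i, W i j = 1)
    {E : Type*} [NormedAddCommGroup E] [InnerProductSpace ℝ E]
    (v : Fin n → E) (hv : ∑ i, v i = 0) :
    ∑ i, ∑ j, W i j * ⟪v i, v j⟫ ≤ sigma2 W * ∑ i, ‖v i‖ ^ 2 :=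
  stmt0_general W v hv
end

section
/- Let n ≥ 1, let W be an n×n symmetric doubly stochastic real matrix, set σ₂ := the operator norm of W − (1/n)𝟙𝟙ᵀ, and set ρ := 1 − (1 − σ₂)/4. Let y₁, …, yₙ be points of a real inner product space with mean ȳ = (1/n)∑ᵢ yᵢ, and define the consensus update with step-size s = 1/2: xᵢ := yᵢ + (1/2)∑_{j=1}^n W i j (yⱼ − yᵢ). Then the mean of x₁, …, xₙ equals ȳ and ∑_{i=1}^n ‖xᵢ − ȳ‖² ≤ ρ · ∑_{i=1}^n ‖yᵢ − ȳ‖²; in particular the variance satisfies Var({xᵢ}) := (1/n)∑ᵢ‖xᵢ − x̄‖² ≤ ρ · Var({yᵢ}). -/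
/-!
Write `z i = y i - ȳ`. Then `∑ z = 0`, so `x i - ȳ = ½ (z i + (W z) i)` and
`W z = (W - (1/n)𝟙𝟙ᵀ) z`. Applying the scalar operator-norm bound to the coordinates of the `z j`
in an orthonormal basis of their span gives `‖W z‖ ≤ σ₂ ‖z‖` (ℓ²-norms over the agents), and
Jensen's inequality for `‖·‖²` together with double stochasticity gives `‖W z‖ ≤ ‖z‖`. Hence
`‖z + W z‖² ≤ ‖z‖² + 2 ‖z‖ ‖W z‖ + ‖W z‖² ≤ (1 + (σ₂ + 1) + 1) ‖z‖²`, i.e. `4 ρ ‖z‖²`.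
-/

open scoped BigOperators

open Finset Matrix

section

variable {ι : Type*} [Fintype ι] {E : Type*}

theorem sum_sq_mulVec_le_opNorm_sq [DecidableEq ι] (A : Matrix ι ι ℝ) (v : ι → ℝ) :
    ∑ i, (A *ᵥ v) i ^ 2 ≤ ‖toEuclideanCLM (𝕜 := ℝ) A‖ ^ 2 * ∑ i, v i ^ 2 := by
  have h := pow_le_pow_left₀ (norm_nonneg _)
    ((toEuclideanCLM (𝕜 := ℝ) A).le_opNorm (WithLp.toLp 2 v)) 2
  rw [toEuclideanCLM_toLp, mul_pow, EuclideanSpace.norm_sq_eq, EuclideanSpace.norm_sq_eq] at h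
  simpa only [Real.norm_eq_abs, sq_abs] using h

theorem sum_norm_sq_sum_smul_le_of_finiteDimensional [DecidableEq ι]
    [NormedAddCommGroup E] [InnerProductSpace ℝ E] [FiniteDimensional ℝ E]
    (A : Matrix ι ι ℝ) (z : ι → E) :
    ∑ i, ‖∑ j, A i j • z j‖ ^ 2 ≤ ‖toEuclideanCLM (𝕜 := ℝ) A‖ ^ 2 * ∑ j, ‖z j‖ ^ 2 := by
  set b := stdOrthonormalBasis ℝ E
  have parseval (u : E) : ‖u‖ ^ 2 = ∑ k, inner ℝ (b k) u ^ 2 := by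
    simp only [← b.sum_sq_norm_inner_right u, Real.norm_eq_abs, sq_abs]
  have coord (i k) :
      inner ℝ (b k) (∑ j, A i j • z j) = (A *ᵥ fun j => inner ℝ (b k) (z j)) i := by
    simp only [inner_sum, real_inner_smul_right, mulVec, dotProduct]
  calc ∑ i, ‖∑ j, A i j • z j‖ ^ 2
      = ∑ k, ∑ i, (A *ᵥ fun j => inner ℝ (b k) (z j)) i ^ 2 := by
        simp only [parseval, coord]
        exact Finset.sum_comm
    _ ≤ ∑ k, ‖toEuclideanCLM (𝕜 := ℝ) A‖ ^ 2 * ∑ j, inner ℝ (b k) (z j) ^ 2 :=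
        sum_le_sum fun k _ => sum_sq_mulVec_le_opNorm_sq A _
    _ = ‖toEuclideanCLM (𝕜 := ℝ) A‖ ^ 2 * ∑ j, ‖z j‖ ^ 2 := by
        rw [← mul_sum, Finset.sum_comm]
        simp only [parseval]

theorem sum_norm_sq_sum_smul_le [DecidableEq ι] [NormedAddCommGroup E] [InnerProductSpace ℝ E]
    (A : Matrix ι ι ℝ) (z : ι → E) :
    ∑ i, ‖∑ j, A i j • z j‖ ^ 2 ≤ ‖toEuclideanCLM (𝕜 := ℝ) A‖ ^ 2 * ∑ j, ‖z j‖ ^ 2 := by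
  set K := Submodule.span ℝ (Set.range z)
  have : FiniteDimensional ℝ K := FiniteDimensional.span_of_finite ℝ (Set.finite_range z)
  let z' : ι → K := fun j => ⟨z j, Submodule.subset_span ⟨j, rfl⟩⟩
  simpa only [← Submodule.norm_coe, Submodule.coe_sum, Submodule.coe_smul] using
    sum_norm_sq_sum_smul_le_of_finiteDimensional A z'

theorem sum_norm_sq_sum_smul_le_of_mem_doublyStochastic [DecidableEq ι]
    [SeminormedAddCommGroup E] [NormedSpace ℝ E]
    {W : Matrix ι ι ℝ} (hW : W ∈ doublyStochastic ℝ ι) (z : ι → E) :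
    ∑ i, ‖∑ j, W i j • z j‖ ^ 2 ≤ ∑ j, ‖z j‖ ^ 2 := by
  obtain ⟨hnonneg, hrow, hcol⟩ := mem_doublyStochastic_iff_sum.1 hW
  have jensen (i) : ‖∑ j, W i j • z j‖ ^ 2 ≤ ∑ j, W i j * ‖z j‖ ^ 2 :=
    (convexOn_univ_norm.pow (fun _ _ => norm_nonneg _) 2).map_sum_le
      (fun j _ => hnonneg i j) (hrow i) (fun _ _ => Set.mem_univ _)
  calc ∑ i, ‖∑ j, W i j • z j‖ ^ 2 ≤ ∑ i, ∑ j, W i j * ‖z j‖ ^ 2 :=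
        sum_le_sum fun i _ => jensen i
    _ = ∑ j, ‖z j‖ ^ 2 := by
        rw [Finset.sum_comm]
        simp only [← sum_mul, hcol, one_mul]

theorem sum_sub_mean_eq_zero [AddCommGroup E] [Module ℝ E] (y : ι → E) :
    ∑ i, (y i - (Fintype.card ι : ℝ)⁻¹ • ∑ j, y j) = 0 := by
  rcases isEmpty_or_nonempty ι with hι | hι
  · simp
  · rw [sum_sub_distrib, sum_const, card_univ, ← Nat.cast_smul_eq_nsmul ℝ,
      smul_inv_smul₀ (by positivity), sub_self]

theorem sum_sum_smul_sub_eq_zero [AddCommGroup E] [Module ℝ E] {W : Matrix ι ι ℝ}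
    (hrow : ∀ i, ∑ j, W i j = 1) (hcol : ∀ j, ∑ i, W i j = 1) (y : ι → E) :
    ∑ i, ∑ j, W i j • (y j - y i) = 0 := by
  simp only [smul_sub, sum_sub_distrib, ← sum_smul, hrow, one_smul]
  rw [Finset.sum_comm]
  simp only [← sum_smul, hcol, one_smul, sub_self]

theorem consensus_step_sub [AddCommGroup E] [Module ℝ E] {W : Matrix ι ι ℝ}
    (hrow : ∀ i, ∑ j, W i j = 1) (y : ι → E) (c : E) (i : ι) :
    y i + (2 : ℝ)⁻¹ • ∑ j, W i j • (y j - y i) - c =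
      (2 : ℝ)⁻¹ • ((y i - c) + ∑ j, W i j • (y j - c)) := by
  have : ∑ j, W i j • (y j - y i) = ∑ j, W i j • (y j - c) - (y i - c) := by
    rw [← one_smul ℝ (y i - c), ← hrow i, sum_smul, ← sum_sub_distrib]
    congr! 1 with j
    rw [← smul_sub]
    abel_nf
  rw [this]
  module

theorem sum_norm_add_sq_le [SeminormedAddCommGroup E] {z w : ι → E} {σ : ℝ} (hσ : 0 ≤ σ)
    (hw : ∑ i, ‖w i‖ ^ 2 ≤ ∑ i, ‖z i‖ ^ 2) (hwσ : ∑ i, ‖w i‖ ^ 2 ≤ σ ^ 2 * ∑ i, ‖z i‖ ^ 2) :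
    ∑ i, ‖z i + w i‖ ^ 2 ≤ (3 + σ) * ∑ i, ‖z i‖ ^ 2 := by
  set Z : PiLp 2 (fun _ : ι => E) := WithLp.toLp 2 z
  set W : PiLp 2 (fun _ : ι => E) := WithLp.toLp 2 w
  have hnorm (u : ι → E) : ∑ i, ‖u i‖ ^ 2 = ‖WithLp.toLp 2 u‖ ^ 2 :=
    (PiLp.norm_sq_eq_of_L2 _ (WithLp.toLp 2 u)).symm
  rw [hnorm, hnorm] at hw hwσ ⊢
  rw [← mul_pow] at hwσ
  have hWZ : ‖W‖ ≤ ‖Z‖ :=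
    (pow_le_pow_iff_left₀ (norm_nonneg _) (norm_nonneg _) two_ne_zero).1 hw
  have hWσZ : ‖W‖ ≤ σ * ‖Z‖ :=
    (pow_le_pow_iff_left₀ (norm_nonneg _) (by positivity) two_ne_zero).1 hwσ
  change ‖Z + W‖ ^ 2 ≤ _
  nlinarith [norm_add_le Z W, norm_nonneg (Z + W), norm_nonneg Z, norm_nonneg W]

end

theorem sum_norm_sq_sum_smul_le_sigma2_sq {n : ℕ} {E : Type*} [NormedAddCommGroup E]
    [InnerProductSpace ℝ E] (W : Matrix (Fin n) (Fin n) ℝ) {z : Fin n → E}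
    (hz : ∑ j, z j = 0) :
    ∑ i, ‖∑ j, W i j • z j‖ ^ 2 ≤ sigma2 W ^ 2 * ∑ j, ‖z j‖ ^ 2 := by
  have h := sum_norm_sq_sum_smul_le (W - (n : ℝ)⁻¹ • Matrix.of fun _ _ => (1 : ℝ)) z
  simpa only [sigma2, Matrix.sub_apply, Matrix.smul_apply, of_apply, smul_eq_mul, mul_one,
    sub_smul, sum_sub_distrib, ← smul_sum, hz, smul_zero, sub_zero] using h

theorem stmt2_general {n : ℕ} (W : Matrix (Fin n) (Fin n) ℝ)
    (hnonneg : ∀ i j, 0 ≤ W i j)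
    (hrow : ∀ i, ∑ j, W i j = 1)
    (hcol : ∀ j, ∑ i, W i j = 1)
    (ρ : ℝ) (hρ : ρ = 1 - (1 - sigma2 W) / 4)
    {E : Type*} [NormedAddCommGroup E] [InnerProductSpace ℝ E]
    (y x : Fin n → E)
    (hx : ∀ i, x i = y i + (2 : ℝ)⁻¹ • ∑ j, W i j • (y j - y i))
    (ybar : E) (hybar : ybar = (n : ℝ)⁻¹ • ∑ i, y i) :
    ((n : ℝ)⁻¹ • ∑ i, x i = ybar) ∧
    (∑ i, ‖x i - ybar‖ ^ 2 ≤ ρ * ∑ i, ‖y i - ybar‖ ^ 2) ∧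
    ((n : ℝ)⁻¹ * ∑ i, ‖x i - (n : ℝ)⁻¹ • ∑ j, x j‖ ^ 2 ≤
      ρ * ((n : ℝ)⁻¹ * ∑ i, ‖y i - ybar‖ ^ 2)) := by
  have hmean : (n : ℝ)⁻¹ • ∑ i, x i = ybar := by
    simp only [hx, sum_add_distrib, ← smul_sum, sum_sum_smul_sub_eq_zero hrow hcol, smul_zero,
      add_zero, hybar]
  set z : Fin n → E := fun i => y i - ybar
  have hz : ∑ i, z i = 0 := by simpa [z, hybar] using sum_sub_mean_eq_zero y
  have hW : W ∈ doublyStochastic ℝ (Fin n) :=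
    mem_doublyStochastic_iff_sum.2 ⟨hnonneg, hrow, hcol⟩
  have hvar : ∑ i, ‖x i - ybar‖ ^ 2 ≤ ρ * ∑ i, ‖z i‖ ^ 2 :=
    calc ∑ i, ‖x i - ybar‖ ^ 2 = 4⁻¹ * ∑ i, ‖z i + ∑ j, W i j • z j‖ ^ 2 := by
          simp only [hx, consensus_step_sub hrow, norm_smul, mul_pow, ← mul_sum, z]
          norm_num
      _ ≤ 4⁻¹ * ((3 + sigma2 W) * ∑ i, ‖z i‖ ^ 2) := by
          gcongr
          exact sum_norm_add_sq_le (norm_nonneg _)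
            (sum_norm_sq_sum_smul_le_of_mem_doublyStochastic hW z)
            (sum_norm_sq_sum_smul_le_sigma2_sq W hz)
      _ = ρ * ∑ i, ‖z i‖ ^ 2 := by rw [hρ]; ring
  refine ⟨hmean, hvar, ?_⟩
  rw [hmean, mul_left_comm]
  exact mul_le_mul_of_nonneg_left hvar (by positivity)

theorem stmt2 {n : ℕ} (hn : 1 ≤ n) (W : Matrix (Fin n) (Fin n) ℝ)
    (hsymm : W.IsSymm)
    (hnonneg : ∀ i j, 0 ≤ W i j)
    (hrow : ∀ i, ∑ j, W i j = 1)
    (hcol : ∀ j, ∑ i, W i j = 1)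
    (ρ : ℝ) (hρ : ρ = 1 - (1 - sigma2 W) / 4)
    {E : Type*} [NormedAddCommGroup E] [InnerProductSpace ℝ E]
    (y x : Fin n → E)
    (hx : ∀ i, x i = y i + (2 : ℝ)⁻¹ • ∑ j, W i j • (y j - y i))
    (ybar : E) (hybar : ybar = (n : ℝ)⁻¹ • ∑ i, y i) :
    ((n : ℝ)⁻¹ • ∑ i, x i = ybar) ∧
    (∑ i, ‖x i - ybar‖ ^ 2 ≤ ρ * ∑ i, ‖y i - ybar‖ ^ 2) ∧
    ((n : ℝ)⁻¹ * ∑ i, ‖x i - (n : ℝ)⁻¹ • ∑ j, x j‖ ^ 2 ≤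
      ρ * ((n : ℝ)⁻¹ * ∑ i, ‖y i - ybar‖ ^ 2)) :=
  stmt2_general W hnonneg hrow hcol ρ hρ y x hx ybar hybar
end

section
/- Let H be a real Hilbert space and X ⊆ H a nonempty closed convex set, with P_X the metric projection onto X (P_X z is the unique nearest point of X to z). Let n ≥ 1, let W be an n×n symmetric doubly stochastic matrix with σ₂ := the operator norm of W − (1/n)𝟙𝟙ᵀ satisfying σ₂ < 1, and set ρ := 1 − (1 − σ₂)/4. Fix η > 0, L ≥ 0, and a point x₁ ∈ X. Suppose sequences (x_{i,t}), (y_{i,t}) in H satisfy: x_{i,1} = x₁ for all i; for each i, t there is a vector g_{i,t} ∈ H with ‖g_{i,t}‖ ≤ L such that y_{i,t+1} = P_X(x_{i,t} − η g_{i,t}); and x_{i,t+1} = y_{i,t+1} + (1/2)∑_{j=1}^n W i j (y_{j,t+1} − y_{i,t+1}). Then for every agent i and every time t, ‖x_{i,t} − x̄_t‖ ≤ 2√n η L/(1 − ρ), where x̄_t = (1/n)∑_{j=1}^n x_{j,t}. -/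
open scoped BigOperators

/-!
Fix a direction `u ∈ H` and read the agents' iterates through `⟪·, u⟫` as vectors `ξ_t ∈ ℝⁿ`.
For doubly stochastic `W` the centering `C = I − 𝟙𝟙ᵀ/n` satisfies `C W = (W − 𝟙𝟙ᵀ/n) C`, so the
mixing step `½(I + W)` contracts the deviation `‖C ξ‖` by `(1 + σ₂)/2 ≤ ρ`. The iterates stay in
`X` by convexity, so the projected gradient step moves each agent by at most `2ηL`, i.e. `ξ` by at
most `2√n ηL‖u‖` in `ℓ²`. Hence `e_{t+1} ≤ ρ (e_t + 2√n ηL‖u‖)` with `e_1 = 0`, and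
`e_t ≤ 2√n ηL‖u‖/(1 − ρ)`; taking `u = x_{i,t} − x̄_t` turns this into the bound in `H`.
-/

open scoped RealInnerProductSpace
open Matrix

lemma IsMinOn.norm_sub_le_two_mul {E : Type*} [SeminormedAddCommGroup E] {X : Set E} {x y z : E}
    (hy : IsMinOn (fun w => ‖w - z‖) X y) (hx : x ∈ X) : ‖y - x‖ ≤ 2 * ‖z - x‖ :=
  calc ‖y - x‖ ≤ ‖y - z‖ + ‖z - x‖ := norm_sub_le_norm_sub_add_norm_sub _ _ _
    _ ≤ ‖x - z‖ + ‖z - x‖ := by gcongr; exact hy hx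
    _ = 2 * ‖z - x‖ := by rw [norm_sub_rev]; ring

section Mixing

variable {ι E : Type*} [Fintype ι] [AddCommGroup E] [Module ℝ E] {w : ι → ℝ}

lemma add_inv_two_smul_sum_smul_sub (hw : ∑ j, w j = 1) (a : E) (z : ι → E) :
    a + (2 : ℝ)⁻¹ • ∑ j, w j • (z j - a) = (2 : ℝ)⁻¹ • (a + ∑ j, w j • z j) := by
  simp only [smul_sub, Finset.sum_sub_distrib, ← Finset.sum_smul, hw, one_smul]
  module

lemma Convex.inv_two_smul_add_sum_smul_mem {X : Set E} (hX : Convex ℝ X)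
    (hw₀ : ∀ j, 0 ≤ w j) (hw₁ : ∑ j, w j = 1) {a : E} (ha : a ∈ X) {z : ι → E}
    (hz : ∀ j, z j ∈ X) : (2 : ℝ)⁻¹ • (a + ∑ j, w j • z j) ∈ X := by
  rw [smul_add]
  exact hX ha (hX.sum_mem (fun j _ => hw₀ j) hw₁ fun j _ => hz j) (by norm_num) (by norm_num)
    (by norm_num)

end Mixing

lemma le_div_one_sub_of_le_mul_add {a : ℕ → ℝ} {r K : ℝ} (hr₀ : 0 ≤ r) (hr₁ : r < 1)
    (hK : 0 ≤ K) (h₁ : a 1 ≤ K / (1 - r)) (hstep : ∀ s, 1 ≤ s → a (s + 1) ≤ r * (a s + K)) :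
    ∀ s, 1 ≤ s → a s ≤ K / (1 - r) := by
  intro s hs
  induction s, hs using Nat.le_induction with
  | base => exact h₁
  | succ s hs ih =>
    have hB : (1 - r) * (K / (1 - r)) = K := mul_div_cancel₀ K (by linarith)
    calc a (s + 1) ≤ r * (a s + K) := hstep s hs
      _ ≤ r * (K / (1 - r) + K) := by gcongr
      _ ≤ K / (1 - r) := by nlinarith

noncomputable section

variable {n : ℕ} {W : Matrix (Fin n) (Fin n) ℝ}

def averagingMatrix (n : ℕ) : Matrix (Fin n) (Fin n) ℝ := (n : ℝ)⁻¹ • Matrix.of fun _ _ => 1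

lemma sigma2_eq_norm_toEuclideanCLM :
    sigma2 W = ‖toEuclideanCLM (𝕜 := ℝ) (W - averagingMatrix n)‖ :=
  rfl

lemma averagingMatrix_mul_self : averagingMatrix n * averagingMatrix n = averagingMatrix n := by
  ext i j
  have : (n : ℝ) ≠ 0 := by have := i.pos; positivity
  simp [averagingMatrix, Matrix.mul_apply]
  field_simp

lemma isStarProjection_averagingMatrix : IsStarProjection (averagingMatrix n) :=
  ⟨averagingMatrix_mul_self, by ext; simp [averagingMatrix]⟩

lemma averagingMatrix_mul_of_sum_col (hcol : ∀ j, ∑ i, W i j = 1) :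
    averagingMatrix n * W = averagingMatrix n := by
  ext i j
  simp [averagingMatrix, Matrix.mul_apply, ← Finset.mul_sum, hcol]

lemma mul_averagingMatrix_of_sum_row (hrow : ∀ i, ∑ j, W i j = 1) :
    W * averagingMatrix n = averagingMatrix n := by
  ext i j
  simp [averagingMatrix, Matrix.mul_apply, ← Finset.sum_mul, hrow]

def centering (n : ℕ) : EuclideanSpace ℝ (Fin n) →L[ℝ] EuclideanSpace ℝ (Fin n) :=
  toEuclideanCLM (𝕜 := ℝ) (1 - averagingMatrix n)

lemma centering_apply (v : EuclideanSpace ℝ (Fin n)) (i : Fin n) :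
    centering n v i = v i - (n : ℝ)⁻¹ * ∑ j, v j := by
  simp [centering, averagingMatrix, Matrix.mulVec, dotProduct, Finset.mul_sum]

lemma norm_centering_le (v : EuclideanSpace ℝ (Fin n)) : ‖centering n v‖ ≤ ‖v‖ := by
  have h := (isStarProjection_averagingMatrix.one_sub.map
    (toEuclideanCLM (n := Fin n) (𝕜 := ℝ))).norm_le
  simpa using (centering n).le_of_opNorm_le h v

lemma centering_toEuclideanCLM (hrow : ∀ i, ∑ j, W i j = 1) (hcol : ∀ j, ∑ i, W i j = 1)
    (v : EuclideanSpace ℝ (Fin n)) :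
    centering n (toEuclideanCLM (𝕜 := ℝ) W v) =
      toEuclideanCLM (𝕜 := ℝ) (W - averagingMatrix n) (centering n v) := by
  have h : (1 - averagingMatrix n) * W = (W - averagingMatrix n) * (1 - averagingMatrix n) := by
    simp only [sub_mul, mul_sub, one_mul, mul_one, averagingMatrix_mul_of_sum_col hcol,
      mul_averagingMatrix_of_sum_row hrow, averagingMatrix_mul_self]
    abel
  simp only [centering, ← mul_apply_eq_comp, ← map_mul, h]

lemma norm_centering_inv_two_smul_add_le (hrow : ∀ i, ∑ j, W i j = 1)
    (hcol : ∀ j, ∑ i, W i j = 1) (v : EuclideanSpace ℝ (Fin n)) :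
    ‖centering n ((2 : ℝ)⁻¹ • (v + toEuclideanCLM (𝕜 := ℝ) W v))‖ ≤
      (1 + sigma2 W) / 2 * ‖centering n v‖ := by
  set M := toEuclideanCLM (𝕜 := ℝ) (W - averagingMatrix n)
  have hM : ‖M (centering n v)‖ ≤ sigma2 W * ‖centering n v‖ := by
    rw [sigma2_eq_norm_toEuclideanCLM]; exact M.le_opNorm _
  rw [map_smul, map_add, centering_toEuclideanCLM hrow hcol, norm_smul]
  calc ‖(2 : ℝ)⁻¹‖ * ‖centering n v + M (centering n v)‖
      ≤ 2⁻¹ * (‖centering n v‖ + sigma2 W * ‖centering n v‖) := by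
        rw [norm_inv, Real.norm_two]
        gcongr
        exact (norm_add_le _ _).trans (by gcongr)
    _ = (1 + sigma2 W) / 2 * ‖centering n v‖ := by ring

theorem norm_centering_le_of_mixing (hrow : ∀ i, ∑ j, W i j = 1) (hcol : ∀ j, ∑ i, W i j = 1)
    {ρ K : ℝ} (hρ : (1 + sigma2 W) / 2 ≤ ρ) (hρ₁ : ρ < 1) (hK : 0 ≤ K)
    {ξ υ : ℕ → EuclideanSpace ℝ (Fin n)} (h₁ : centering n (ξ 1) = 0)
    (hstep : ∀ s, 1 ≤ s → ‖υ (s + 1) - ξ s‖ ≤ K)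
    (hmix : ∀ s, 1 ≤ s →
      ξ (s + 1) = (2 : ℝ)⁻¹ • (υ (s + 1) + toEuclideanCLM (𝕜 := ℝ) W (υ (s + 1)))) :
    ∀ s, 1 ≤ s → ‖centering n (ξ s)‖ ≤ K / (1 - ρ) := by
  have hρ₀ : 0 ≤ ρ := by linarith [show 0 ≤ sigma2 W from norm_nonneg _]
  refine le_div_one_sub_of_le_mul_add hρ₀ hρ₁ hK (by rw [h₁, norm_zero]; bound) ?_
  intro s hs
  have hυ : ‖centering n (υ (s + 1))‖ ≤ ‖centering n (ξ s)‖ + K := by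
    calc ‖centering n (υ (s + 1))‖
        = ‖centering n (ξ s) + centering n (υ (s + 1) - ξ s)‖ := by rw [← map_add, add_sub_cancel]
      _ ≤ ‖centering n (ξ s)‖ + ‖υ (s + 1) - ξ s‖ :=
          (norm_add_le _ _).trans (by gcongr; exact norm_centering_le _)
      _ ≤ ‖centering n (ξ s)‖ + K := by gcongr; exact hstep s hs
  calc ‖centering n (ξ (s + 1))‖ ≤ (1 + sigma2 W) / 2 * ‖centering n (υ (s + 1))‖ := by
        rw [hmix s hs]; exact norm_centering_inv_two_smul_add_le hrow hcol _
    _ ≤ ρ * (‖centering n (ξ s)‖ + K) := by gcongr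

lemma norm_toLp_le_sqrt_mul {f : Fin n → ℝ} {C : ℝ} (hC : 0 ≤ C) (hf : ∀ j, |f j| ≤ C) :
    ‖(WithLp.toLp 2 f : EuclideanSpace ℝ (Fin n))‖ ≤ √n * C := by
  rw [EuclideanSpace.norm_eq, ← Real.sqrt_sq hC, ← Real.sqrt_mul (Nat.cast_nonneg _)]
  gcongr
  calc ∑ j, ‖f j‖ ^ 2 ≤ ∑ _j : Fin n, C ^ 2 := by
        gcongr with j; rw [Real.norm_eq_abs]; exact hf j
    _ = n * C ^ 2 := by simp

section InnerCoords

variable {H : Type*} [NormedAddCommGroup H] [InnerProductSpace ℝ H]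

def innerCoords (u : H) (z : Fin n → H) : EuclideanSpace ℝ (Fin n) :=
  WithLp.toLp 2 fun j => ⟪z j, u⟫

lemma innerCoords_sub (u : H) (z z' : Fin n → H) :
    innerCoords u z - innerCoords u z' = innerCoords u (z - z') := by
  ext j; simp [innerCoords, inner_sub_left]

lemma innerCoords_inv_two_smul_add (u : H) (z : Fin n → H) :
    innerCoords u (fun i => (2 : ℝ)⁻¹ • (z i + ∑ j, W i j • z j)) =
      (2 : ℝ)⁻¹ • (innerCoords u z + toEuclideanCLM (𝕜 := ℝ) W (innerCoords u z)) := by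
  ext i
  simp [innerCoords, inner_add_left, real_inner_smul_left, sum_inner, Matrix.mulVec, dotProduct]

lemma centering_innerCoords (u : H) (z : Fin n → H) (i : Fin n) :
    centering n (innerCoords u z) i = ⟪z i - (n : ℝ)⁻¹ • ∑ j, z j, u⟫ := by
  simp [centering_apply, innerCoords, inner_sub_left, real_inner_smul_left, sum_inner]

lemma norm_innerCoords_le {u : H} {z : Fin n → H} {δ : ℝ} (hδ : 0 ≤ δ) (hz : ∀ j, ‖z j‖ ≤ δ) :
    ‖innerCoords u z‖ ≤ √n * (δ * ‖u‖) :=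
  norm_toLp_le_sqrt_mul (by positivity) fun j =>
    (abs_real_inner_le_norm _ _).trans (by gcongr; exact hz j)

theorem norm_sub_average_le_of_mixing (hrow : ∀ i, ∑ j, W i j = 1)
    (hcol : ∀ j, ∑ i, W i j = 1) {ρ δ : ℝ} (hρ : (1 + sigma2 W) / 2 ≤ ρ) (hρ₁ : ρ < 1)
    (hδ : 0 ≤ δ) {x y : Fin n → ℕ → H} {x₁ : H} (hinit : ∀ i, x i 1 = x₁)
    (hstep : ∀ i s, 1 ≤ s → ‖y i (s + 1) - x i s‖ ≤ δ)
    (hmix : ∀ i s, 1 ≤ s → x i (s + 1) = (2 : ℝ)⁻¹ • (y i (s + 1) + ∑ j, W i j • y j (s + 1)))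
    (i : Fin n) {s : ℕ} (hs : 1 ≤ s) :
    ‖x i s - (n : ℝ)⁻¹ • ∑ j, x j s‖ ≤ √n * δ / (1 - ρ) := by
  set v := x i s - (n : ℝ)⁻¹ • ∑ j, x j s
  have hn : (n : ℝ) ≠ 0 := by have := i.pos; positivity
  have hinner : ∀ u : H, ⟪v, u⟫ ≤ √n * δ / (1 - ρ) * ‖u‖ := by
    intro u
    have hscalar := norm_centering_le_of_mixing hrow hcol hρ hρ₁ (K := √n * (δ * ‖u‖))
      (by positivity) (ξ := fun s => innerCoords u (x · s)) (υ := fun s => innerCoords u (y · s))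
      (by ext j; simp [centering_innerCoords, hinit, ← Nat.cast_smul_eq_nsmul ℝ, smul_smul, hn])
      (fun s hs => by rw [innerCoords_sub]; exact norm_innerCoords_le hδ fun j => hstep j s hs)
      (fun s hs => by rw [← innerCoords_inv_two_smul_add]; congr; ext j; exact hmix j s hs) s hs
    calc ⟪v, u⟫ = centering n (innerCoords u (x · s)) i :=
          (centering_innerCoords u (x · s) i).symm
      _ ≤ ‖centering n (innerCoords u (x · s))‖ :=
          (Real.le_norm_self _).trans (PiLp.norm_apply_le _ i)
      _ ≤ √n * (δ * ‖u‖) / (1 - ρ) := hscalar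
      _ = √n * δ / (1 - ρ) * ‖u‖ := by ring
  have hv := hinner v
  rw [real_inner_self_eq_norm_mul_norm] at hv
  rcases (norm_nonneg v).eq_or_lt with h0 | hpos
  · rw [← h0]; exact div_nonneg (by positivity) (by linarith)
  · exact le_of_mul_le_mul_right hv hpos

end InnerCoords

end

theorem stmt4_general {H : Type*} [NormedAddCommGroup H] [InnerProductSpace ℝ H]
    (X : Set H) (hXcv : Convex ℝ X)
    {n : ℕ} (W : Matrix (Fin n) (Fin n) ℝ)
    (hnonneg : ∀ i j, 0 ≤ W i j)
    (hrow : ∀ i, ∑ j, W i j = 1)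
    (hcol : ∀ j, ∑ i, W i j = 1)
    (hσ : sigma2 W < 1)
    (ρ : ℝ) (hρ : ρ = 1 - (1 - sigma2 W) / 4)
    (η L : ℝ) (hη : 0 < η) (hL : 0 ≤ L)
    (x₁ : H) (hx₁ : x₁ ∈ X)
    (x y : Fin n → ℕ → H) (g : Fin n → ℕ → H)
    (hinit : ∀ i, x i 1 = x₁)
    (hg : ∀ i t, 1 ≤ t → ‖g i t‖ ≤ L)
    -- `y i (t+1)` is the metric projection of `x i t - η • g i t` onto `X`
    (hproj : ∀ i t, 1 ≤ t → y i (t + 1) ∈ X ∧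
      ∀ w ∈ X, ‖y i (t + 1) - (x i t - η • g i t)‖ ≤ ‖w - (x i t - η • g i t)‖)
    (hcons : ∀ i t, 1 ≤ t →
      x i (t + 1) = y i (t + 1) + (2 : ℝ)⁻¹ • ∑ j, W i j • (y j (t + 1) - y i (t + 1))) :
    ∀ i t, 1 ≤ t →
      ‖x i t - (n : ℝ)⁻¹ • ∑ j, x j t‖ ≤ 2 * Real.sqrt n * η * L / (1 - ρ) := by
  have hρ₁ : ρ < 1 := by rw [hρ]; linarith
  have hmix : ∀ i t, 1 ≤ t →
      x i (t + 1) = (2 : ℝ)⁻¹ • (y i (t + 1) + ∑ j, W i j • y j (t + 1)) := fun i t ht =>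
    (hcons i t ht).trans (add_inv_two_smul_sum_smul_sub (hrow i) _ _)
  have hmem : ∀ t, 1 ≤ t → ∀ i, x i t ∈ X := by
    intro t ht
    induction t, ht using Nat.le_induction with
    | base => intro i; rw [hinit]; exact hx₁
    | succ t ht _ =>
      intro i
      rw [hmix i t ht]
      exact hXcv.inv_two_smul_add_sum_smul_mem (hnonneg i) (hrow i) (hproj i t ht).1
        fun j => (hproj j t ht).1
  have hstep : ∀ i t, 1 ≤ t → ‖y i (t + 1) - x i t‖ ≤ 2 * η * L := by
    intro i t ht
    calc ‖y i (t + 1) - x i t‖ ≤ 2 * ‖x i t - η • g i t - x i t‖ :=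
          (isMinOn_iff.2 (hproj i t ht).2).norm_sub_le_two_mul (hmem t ht i)
      _ ≤ 2 * η * L := by
          rw [sub_sub_cancel_left, norm_neg, norm_smul, Real.norm_of_nonneg hη.le, mul_assoc]
          gcongr
          exact hg i t ht
  intro i t ht
  calc ‖x i t - (n : ℝ)⁻¹ • ∑ j, x j t‖ ≤ √n * (2 * η * L) / (1 - ρ) :=
        norm_sub_average_le_of_mixing hrow hcol (by rw [hρ]; linarith) hρ₁ (by positivity) hinit
          hstep hmix i ht
    _ = 2 * Real.sqrt n * η * L / (1 - ρ) := by ring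

theorem stmt4 {H : Type*} [NormedAddCommGroup H] [InnerProductSpace ℝ H] [CompleteSpace H]
    (X : Set H) (hXne : X.Nonempty) (hXcl : IsClosed X) (hXcv : Convex ℝ X)
    {n : ℕ} (hn : 1 ≤ n) (W : Matrix (Fin n) (Fin n) ℝ)
    (hsymm : W.IsSymm)
    (hnonneg : ∀ i j, 0 ≤ W i j)
    (hrow : ∀ i, ∑ j, W i j = 1)
    (hcol : ∀ j, ∑ i, W i j = 1)
    (hσ : sigma2 W < 1)
    (ρ : ℝ) (hρ : ρ = 1 - (1 - sigma2 W) / 4)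
    (η L : ℝ) (hη : 0 < η) (hL : 0 ≤ L)
    (x₁ : H) (hx₁ : x₁ ∈ X)
    (x y : Fin n → ℕ → H) (g : Fin n → ℕ → H)
    (hinit : ∀ i, x i 1 = x₁)
    (hg : ∀ i t, 1 ≤ t → ‖g i t‖ ≤ L)
    -- `y i (t+1)` is the metric projection of `x i t - η • g i t` onto `X`
    (hproj : ∀ i t, 1 ≤ t → y i (t + 1) ∈ X ∧
      ∀ w ∈ X, ‖y i (t + 1) - (x i t - η • g i t)‖ ≤ ‖w - (x i t - η • g i t)‖)
    (hcons : ∀ i t, 1 ≤ t →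
      x i (t + 1) = y i (t + 1) + (2 : ℝ)⁻¹ • ∑ j, W i j • (y j (t + 1) - y i (t + 1))) :
    ∀ i t, 1 ≤ t →
      ‖x i t - (n : ℝ)⁻¹ • ∑ j, x j t‖ ≤ 2 * Real.sqrt n * η * L / (1 - ρ) :=
  stmt4_general X hXcv W hnonneg hrow hcol hσ ρ hρ η L hη hL x₁ hx₁ x y g hinit hg hproj hcons
end

section
/- Let n ≥ 1, let W be an n×n doubly stochastic real matrix (all entries nonnegative, every row and every column sums to 1), let y₁, …, yₙ and p be points of a real inner product space, let s ∈ [0, 1], and define xᵢ := (1 − s) yᵢ + s ∑_{j=1}^n W i j yⱼ for each i. Then ∑_{i=1}^n ‖xᵢ − p‖² ≤ ∑_{i=1}^n ‖yᵢ − p‖². -/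
open scoped BigOperators

lemma sq_convex_comb {ι : Type*} {E : Type*} [NormedAddCommGroup E] [NormedSpace ℝ E]
    (t : Finset ι) (w : ι → ℝ) (hw : ∀ i ∈ t, 0 ≤ w i)
    (h1 : ∑ i ∈ t, w i = 1) (v : ι → E) :
    ‖∑ i ∈ t, w i • v i‖ ^ 2 ≤ ∑ i ∈ t, w i * ‖v i‖ ^ 2 := by
  have hnorm : ‖∑ i ∈ t, w i • v i‖ ≤ ∑ i ∈ t, w i * ‖v i‖ := by
    refine (norm_sum_le _ _).trans (Finset.sum_le_sum fun i hi => ?_)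
    rw [norm_smul, Real.norm_eq_abs, abs_of_nonneg (hw i hi)]
  have hconv : ConvexOn ℝ Set.univ (fun z : ℝ => z ^ 2) :=
    Even.convexOn_pow even_two
  have hj := hconv.map_sum_le hw h1 (fun i _ => Set.mem_univ (‖v i‖))
  simp only [smul_eq_mul] at hj
  calc ‖∑ i ∈ t, w i • v i‖ ^ 2 ≤ (∑ i ∈ t, w i * ‖v i‖) ^ 2 := by
        apply pow_le_pow_left₀ (norm_nonneg _) hnorm
    _ ≤ ∑ i ∈ t, w i * ‖v i‖ ^ 2 := hj

theorem stmt7 {n : ℕ} (hn : 1 ≤ n) (W : Matrix (Fin n) (Fin n) ℝ)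
    (hnonneg : ∀ i j, 0 ≤ W i j)
    (hrow : ∀ i, ∑ j, W i j = 1)
    (hcol : ∀ j, ∑ i, W i j = 1)
    {E : Type*} [NormedAddCommGroup E] [InnerProductSpace ℝ E]
    (y : Fin n → E) (p : E) (s : ℝ) (hs0 : 0 ≤ s) (hs1 : s ≤ 1)
    (x : Fin n → E)
    (hx : ∀ i, x i = (1 - s) • y i + s • ∑ j, W i j • y j) :
    ∑ i, ‖x i - p‖ ^ 2 ≤ ∑ i, ‖y i - p‖ ^ 2 := by
  have key : ∀ i, ‖x i - p‖ ^ 2 ≤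
      (1 - s) * ‖y i - p‖ ^ 2 + s * ∑ j, W i j * ‖y j - p‖ ^ 2 := by
    intro i
    have hz : x i - p = (1 - s) • (y i - p) + s • ∑ j, W i j • (y j - p) := by
      rw [hx i]
      have : ∑ j, W i j • (y j - p) = (∑ j, W i j • y j) - p := by
        simp [smul_sub, Finset.sum_sub_distrib, ← Finset.sum_smul, hrow i]
      rw [this]
      module
    have hz2 : ‖∑ j, W i j • (y j - p)‖ ^ 2 ≤ ∑ j, W i j * ‖y j - p‖ ^ 2 :=
      sq_convex_comb Finset.univ (W i) (fun j _ => hnonneg i j) (hrow i) _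
    have hmix : ‖x i - p‖ ^ 2 ≤
        (1 - s) * ‖y i - p‖ ^ 2 + s * ‖∑ j, W i j • (y j - p)‖ ^ 2 := by
      rw [hz]
      have hconv : ConvexOn ℝ Set.univ (fun z : ℝ => z ^ 2) :=
        Even.convexOn_pow even_two
      have hn1 : ‖(1 - s) • (y i - p) + s • ∑ j, W i j • (y j - p)‖ ≤
          (1 - s) * ‖y i - p‖ + s * ‖∑ j, W i j • (y j - p)‖ := by
        refine (norm_add_le _ _).trans ?_
        rw [norm_smul, norm_smul, Real.norm_eq_abs, Real.norm_eq_abs,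
          abs_of_nonneg (by linarith), abs_of_nonneg hs0]
      calc ‖(1 - s) • (y i - p) + s • ∑ j, W i j • (y j - p)‖ ^ 2
          ≤ ((1 - s) * ‖y i - p‖ + s * ‖∑ j, W i j • (y j - p)‖) ^ 2 :=
            pow_le_pow_left₀ (norm_nonneg _) hn1 2
        _ ≤ (1 - s) * ‖y i - p‖ ^ 2 + s * ‖∑ j, W i j • (y j - p)‖ ^ 2 := by
            have := hconv.2 (Set.mem_univ (‖y i - p‖))
              (Set.mem_univ (‖∑ j, W i j • (y j - p)‖)) (by linarith : (0:ℝ) ≤ 1 - s)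
              hs0 (by ring : (1 - s) + s = 1)
            simpa [smul_eq_mul] using this
    calc ‖x i - p‖ ^ 2 ≤ (1 - s) * ‖y i - p‖ ^ 2 + s * ‖∑ j, W i j • (y j - p)‖ ^ 2 := hmix
      _ ≤ (1 - s) * ‖y i - p‖ ^ 2 + s * ∑ j, W i j * ‖y j - p‖ ^ 2 := by
          have := mul_le_mul_of_nonneg_left hz2 hs0
          linarith
  calc ∑ i, ‖x i - p‖ ^ 2
      ≤ ∑ i, ((1 - s) * ‖y i - p‖ ^ 2 + s * ∑ j, W i j * ‖y j - p‖ ^ 2) :=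
        Finset.sum_le_sum fun i _ => key i
    _ = ∑ i, ‖y i - p‖ ^ 2 := by
        rw [Finset.sum_add_distrib, ← Finset.mul_sum, ← Finset.mul_sum,
          Finset.sum_comm]
        have : ∑ j, ∑ i, W i j * ‖y j - p‖ ^ 2 = ∑ j, ‖y j - p‖ ^ 2 := by
          refine Finset.sum_congr rfl fun j _ => ?_
          rw [← Finset.sum_mul, hcol j, one_mul]
        rw [this]; ring
end
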